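/- Let B be a skew-symmetrizable n×n integer matrix and let t be a vertex reached from the initial vertex t_0 by a path (i_1,…,i_m). Then C^{−B;t_0}_t = C^{B;t_0}_t + F^{B;t_0}_t · B_t, where C^{−B;t_0}_t denotes the C-matrix for the initial matrix −B along the same path, and B_t is the exchange matrix at t. -/

import Mathlib

open Matrix

section Defs

variable {ι : Type} [Fintype ι] [DecidableEq ι]
variable {R : Type} [CommRing R] [LinearOrder R] [IsStrictOrderedRing R]

/-- Entrywise positive part `[A]₊`. -/
def matPos (A : Matrix ι ι R) : Matrix ι ι R := fun i j => max (A i j) 0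

/-- `A^{k•}`: the matrix keeping only the `k`-th row of `A`. -/
def rowSel (k : ι) (A : Matrix ι ι R) : Matrix ι ι R := fun i j => if i = k then A i j else 0

/-- `A^{•k}`: the matrix keeping only the `k`-th column of `A`. -/
def colSel (k : ι) (A : Matrix ι ι R) : Matrix ι ι R := fun i j => if j = k then A i j else 0

/-- Entrywise maximum of two matrices. -/
def emax (A B : Matrix ι ι R) : Matrix ι ι R := fun i j => max (A i j) (B i j)

/-- `J_ℓ`: identity matrix with `(ℓ,ℓ)` entry replaced by `-1`. -/
def Jmat (ℓ : ι) : Matrix ι ι R := Matrix.diagonal fun i => if i = ℓ then -1 else 1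

/-- Matrix mutation `μ_k(B)` in direction `k`. -/
def mutate (B : Matrix ι ι R) (k : ι) : Matrix ι ι R := fun i j =>
  if i = k ∨ j = k then -(B i j)
  else B i j + max (B i k) 0 * B k j + B i k * max (-(B k j)) 0

/-- The data `(B_t, C_t, G_t, F_t)` attached to a vertex. -/
structure SeedData (ι R : Type) where
  B : Matrix ι ι R
  C : Matrix ι ι R
  G : Matrix ι ι R
  F : Matrix ι ι R

/-- One final-seed mutation step in direction `ℓ` (with initial exchange matrix `B0`). -/
def seedStep (B0 : Matrix ι ι R) (s : SeedData ι R) (ℓ : ι) : SeedData ι R where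
  B := mutate s.B ℓ
  C := s.C * (Jmat ℓ + rowSel ℓ (matPos s.B)) + colSel ℓ (matPos (-s.C)) * s.B
  G := s.G * (Jmat ℓ + colSel ℓ (matPos s.B)) - B0 * colSel ℓ (matPos s.C)
  F := s.F * Jmat ℓ + emax (colSel ℓ (matPos s.C) + s.F * colSel ℓ (matPos s.B))
      (colSel ℓ (matPos (-s.C)) + s.F * colSel ℓ (matPos (-s.B)))

/-- The seed data at the endpoint of the path `p` starting from the initial vertex. -/
def seedOf (B0 : Matrix ι ι R) (p : List ι) : SeedData ι R :=
  p.foldl (seedStep B0) ⟨B0, 1, 1, 0⟩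

/-- The exchange matrix `B_t` at the end of the path `p`. -/
def Bpath (B : Matrix ι ι R) (p : List ι) : Matrix ι ι R := (seedOf B p).B

/-- The `C`-matrix `C^{B;t_0}_t` at the end of the path `p`. -/
def Cmat (B : Matrix ι ι R) (p : List ι) : Matrix ι ι R := (seedOf B p).C

/-- The `G`-matrix `G^{B;t_0}_t` at the end of the path `p`. -/
def Gmat (B : Matrix ι ι R) (p : List ι) : Matrix ι ι R := (seedOf B p).G

/-- The `F`-matrix `F^{B;t_0}_t` at the end of the path `p`. -/
def Fmat (B : Matrix ι ι R) (p : List ι) : Matrix ι ι R := (seedOf B p).F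

/-- `B` is skew-symmetrizable: `DB` is skew-symmetric for some positive diagonal `D`. -/
def IsSkewSymmetrizable (B : Matrix ι ι ℤ) : Prop :=
  ∃ d : ι → ℤ, (∀ i, 0 < d i) ∧ (Matrix.diagonal d * B)ᵀ = -(Matrix.diagonal d * B)

/-- Column sign-coherence: every column is nonzero and has all entries of one sign. -/
def ColSignCoherent (A : Matrix ι ι ℤ) : Prop :=
  ∀ j, (∃ i, A i j ≠ 0) ∧ ((∀ i, 0 ≤ A i j) ∨ (∀ i, A i j ≤ 0))

/-- Row sign-coherence: every row is nonzero and has all entries of one sign. -/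
def RowSignCoherent (A : Matrix ι ι ℤ) : Prop :=
  ∀ i, (∃ j, A i j ≠ 0) ∧ ((∀ j, 0 ≤ A i j) ∨ (∀ j, A i j ≤ 0))

/-- `ε` is the column sign `ε_{•ℓ}(A)` of the (sign-coherent, nonzero) `ℓ`-th column of `A`. -/
def IsColSign (ε : ℤ) (A : Matrix ι ι ℤ) (ℓ : ι) : Prop :=
  (ε = 1 ∨ ε = -1) ∧ (∃ i, A i ℓ ≠ 0) ∧ ∀ i, 0 ≤ ε * A i ℓ

/-- `ε` is the row sign `ε_{k•}(A)` of the (sign-coherent, nonzero) `k`-th row of `A`. -/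
def IsRowSign (ε : ℤ) (A : Matrix ι ι ℤ) (k : ι) : Prop :=
  (ε = 1 ∨ ε = -1) ∧ (∃ j, A k j ≠ 0) ∧ ∀ j, 0 ≤ ε * A k j

/-- Sign-coherence of `C`-matrices: for every skew-symmetrizable initial integer matrix and
every path, the associated `C`-matrix is column sign-coherent. -/
def SignCoherenceOfC : Prop :=
  ∀ (κ : Type) [Fintype κ] [DecidableEq κ], ∀ B : Matrix κ κ ℤ,
    IsSkewSymmetrizable B → ∀ p : List κ, ColSignCoherent (Cmat B p)

/-- The principal extension `B̄ = [[B, -I],[I, O]]` of `B`, on the index type `Fin n ⊕ Fin n`. -/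
def pext {n : ℕ} (B : Matrix (Fin n) (Fin n) ℤ) :
    Matrix (Fin n ⊕ Fin n) (Fin n ⊕ Fin n) ℤ :=
  Matrix.fromBlocks B (-1) 1 0

noncomputable section FPolys

/-- The ambient field of rational functions `ℚ(y_i : i ∈ ι)` (fraction field of `ℤ[y_i]`). -/
abbrev FField (ι : Type) := FractionRing (MvPolynomial ι ℤ)

/-- The variable `y_i` inside the fraction field. -/
def yvar (i : ι) : FField ι := algebraMap (MvPolynomial ι ℤ) (FField ι) (MvPolynomial.X i)

/-- One mutation step for the triple `(B_t, C_t, (F_{j;t})_j)`. -/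
def fpolyStep (s : Matrix ι ι ℤ × Matrix ι ι ℤ × (ι → FField ι)) (ℓ : ι) :
    Matrix ι ι ℤ × Matrix ι ι ℤ × (ι → FField ι) :=
  ⟨mutate s.1 ℓ,
   s.2.1 * (Jmat ℓ + rowSel ℓ (matPos s.1)) + colSel ℓ (matPos (-s.2.1)) * s.1,
   fun j => if j = ℓ then
     (s.2.2 ℓ)⁻¹ *
       ((∏ i, yvar i ^ (max (s.2.1 i ℓ) 0).toNat) * (∏ i, s.2.2 i ^ (max (s.1 i ℓ) 0).toNat)
        + (∏ i, yvar i ^ (max (-(s.2.1 i ℓ)) 0).toNat) *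
            (∏ i, s.2.2 i ^ (max (-(s.1 i ℓ)) 0).toNat))
   else s.2.2 j⟩

/-- The `F`-polynomial `F^{B;t_0}_{j;t}` (as an element of the field of rational functions)
at the end of the path `p`. -/
def Fpoly (B : Matrix ι ι ℤ) (p : List ι) : ι → FField ι :=
  (p.foldl fpolyStep ⟨B, 1, fun _ => 1⟩).2.2

/-- The polynomial representing an element of the fraction field (when it is a polynomial). -/
def polyOf (x : FField ι) : MvPolynomial ι ℤ := by
  classical exact
    if h : ∃ q : MvPolynomial ι ℤ, algebraMap (MvPolynomial ι ℤ) (FField ι) q = x then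
      h.choose else 0

/-- The `H`-matrix `H^{B;t_0}_t`: `h_{ij;t}` is the minimum over exponent vectors `a` in the
support of `F^{B;t_0}_{j;t}` of `-a_i + ∑_{l ≠ i} [-b_{il}]₊ a_l`. -/
def Hmat (B : Matrix ι ι ℤ) (p : List ι) : Matrix ι ι ℤ := fun i j =>
  if h : (polyOf (Fpoly B p j)).support.Nonempty then
    (polyOf (Fpoly B p j)).support.inf' h
      (fun a => -(a i : ℤ) + ∑ l ∈ Finset.univ.erase i, max (-(B i l)) 0 * (a l : ℤ))
  else 0

end FPolys

/-- The embedding `ℚ(y_1,…,y_n) → ℚ(y_1,…,y_{2n})` sending `y_i` to `y_i`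
(the second batch of variables indexed by the right summand). -/
noncomputable def embK (n : ℕ) : FField (Fin n) →+* FField (Fin n ⊕ Fin n) :=
  IsFractionRing.lift
    (g := (algebraMap (MvPolynomial (Fin n ⊕ Fin n) ℤ) (FField (Fin n ⊕ Fin n))).comp
      (MvPolynomial.rename (Sum.inl : Fin n → Fin n ⊕ Fin n)).toRingHom)
    (by
      intro a b hab
      simp only [RingHom.coe_comp, Function.comp_apply, AlgHom.toRingHom_eq_coe,
        RingHom.coe_coe] at hab
      exact MvPolynomial.rename_injective _ Sum.inl_injective
        (IsFractionRing.injective (MvPolynomial (Fin n ⊕ Fin n) ℤ)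
          (FField (Fin n ⊕ Fin n)) hab))

/-- `D⁻¹ Cᵀ D` over `ℚ`, for the positive diagonal skew-symmetrizer `D = diagonal d`. -/
noncomputable def dCd {n : ℕ} (d : Fin n → ℤ) (C : Matrix (Fin n) (Fin n) ℤ) :
    Matrix (Fin n) (Fin n) ℚ :=
  (Matrix.diagonal fun i => (d i : ℚ))⁻¹ * (C.map (Int.cast : ℤ → ℚ))ᵀ *
    Matrix.diagonal fun i => (d i : ℚ)

end Defs

/-! Induction along the path. Negating the initial matrix negates every `B_t`, and `B_t` stays
skew-symmetrizable, so it has zero diagonal. The inductive step is then an entrywise identity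
whose only non-linear ingredient is this: the two arguments of the maximum in the
`F`-recursion differ by `x = (C_t + F_t B_t)_{iℓ}`, so the maximum is
`[(C_t)_{iℓ}]_+ + (F_t [B_t]_+)_{iℓ} + [-x]_+`, and `[-x]_+` is precisely the term that the
`C`-recursion produces for the pair `(-B_t, C_t + F_t B_t)`. -/

section MatrixAlgebra

variable {ι R : Type} [DecidableEq ι] [CommRing R]

theorem colSel_add (ℓ : ι) (A X : Matrix ι ι R) :
    colSel ℓ A + colSel ℓ X = colSel ℓ (A + X) := by
  ext i j
  by_cases h : j = ℓ <;> simp [colSel, h]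

theorem emax_colSel [LinearOrder R] (ℓ : ι) (A X : Matrix ι ι R) :
    emax (colSel ℓ A) (colSel ℓ X) = colSel ℓ (emax A X) := by
  ext i j
  by_cases h : j = ℓ <;> simp [emax, colSel, h]

variable [Fintype ι]

theorem colSel_mul_apply (ℓ : ι) (A X : Matrix ι ι R) (i j : ι) :
    (colSel ℓ A * X) i j = A i ℓ * X ℓ j := by
  simp [Matrix.mul_apply, colSel, ite_mul]

theorem mul_colSel (ℓ : ι) (A X : Matrix ι ι R) : A * colSel ℓ X = colSel ℓ (A * X) := by
  ext i j
  by_cases h : j = ℓ <;> simp [Matrix.mul_apply, colSel, h]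

theorem mul_rowSel (ℓ : ι) (A X : Matrix ι ι R) : A * rowSel ℓ X = colSel ℓ A * X := by
  ext i j
  simp [Matrix.mul_apply, colSel, rowSel, ite_mul, mul_ite]

theorem mul_Jmat (ℓ : ι) (A : Matrix ι ι R) : A * Jmat ℓ = A - (2 : R) • colSel ℓ A := by
  ext i j
  simp only [Jmat, Matrix.mul_diagonal, Matrix.sub_apply, Matrix.smul_apply, colSel]
  split_ifs <;> ring

end MatrixAlgebra

section Steps

variable {ι R : Type} [Fintype ι] [DecidableEq ι] [CommRing R] [LinearOrder R]

def cMatStep (B C : Matrix ι ι R) (ℓ : ι) : Matrix ι ι R :=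
  C * (Jmat ℓ + rowSel ℓ (matPos B)) + colSel ℓ (matPos (-C)) * B

def fMatStep (B C F : Matrix ι ι R) (ℓ : ι) : Matrix ι ι R :=
  F * Jmat ℓ + emax (colSel ℓ (matPos C) + F * colSel ℓ (matPos B))
    (colSel ℓ (matPos (-C)) + F * colSel ℓ (matPos (-B)))

theorem seedOf_append_singleton (B : Matrix ι ι R) (p : List ι) (ℓ : ι) :
    seedOf B (p ++ [ℓ]) = seedStep B (seedOf B p) ℓ := by
  simp [seedOf, List.foldl_append]

theorem Bpath_append_singleton (B : Matrix ι ι R) (p : List ι) (ℓ : ι) :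
    Bpath B (p ++ [ℓ]) = mutate (Bpath B p) ℓ := by
  rw [Bpath, seedOf_append_singleton]; rfl

theorem Cmat_append_singleton (B : Matrix ι ι R) (p : List ι) (ℓ : ι) :
    Cmat B (p ++ [ℓ]) = cMatStep (Bpath B p) (Cmat B p) ℓ := by
  rw [Cmat, seedOf_append_singleton]; rfl

theorem Fmat_append_singleton (B : Matrix ι ι R) (p : List ι) (ℓ : ι) :
    Fmat B (p ++ [ℓ]) = fMatStep (Bpath B p) (Cmat B p) (Fmat B p) ℓ := by
  rw [Fmat, seedOf_append_singleton]; rfl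

theorem cMatStep_apply (B C : Matrix ι ι R) (ℓ i j : ι) :
    cMatStep B C ℓ i j = C i j - 2 * colSel ℓ C i j + C i ℓ * max (B ℓ j) 0
      + max (-C i ℓ) 0 * B ℓ j := by
  simp only [cMatStep, mul_add, mul_Jmat, mul_rowSel, Matrix.add_apply, Matrix.sub_apply,
    Matrix.smul_apply, smul_eq_mul, colSel_mul_apply]
  rfl

theorem fMatStep_mul_apply (B C F A : Matrix ι ι R) (ℓ i j : ι) :
    (fMatStep B C F ℓ * A) i j = (F * A) i j - 2 * F i ℓ * A ℓ j
      + max (max (C i ℓ) 0 + (F * matPos B) i ℓ) (max (-C i ℓ) 0 + (F * matPos (-B)) i ℓ)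
        * A ℓ j := by
  simp only [fMatStep, mul_colSel, colSel_add, emax_colSel, mul_Jmat, add_mul, sub_mul,
    smul_mul_assoc, Matrix.add_apply, Matrix.sub_apply, Matrix.smul_apply, colSel_mul_apply]
  simp [emax, matPos, Matrix.add_apply, mul_assoc]

theorem mutate_eq_of_apply_self_eq_zero {B : Matrix ι ι R} {ℓ : ι} (hB : B ℓ ℓ = 0) :
    mutate B ℓ = B + colSel ℓ (matPos B) * B + colSel ℓ B * matPos (-B)
      - (2 : R) • (rowSel ℓ B + colSel ℓ B) := by
  ext k j
  simp only [mutate, Matrix.add_apply, Matrix.sub_apply, Matrix.smul_apply, smul_eq_mul,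
    colSel_mul_apply, rowSel, colSel, matPos, Matrix.neg_apply]
  by_cases hk : k = ℓ <;> by_cases hj : j = ℓ <;>
    simp only [hk, hj, hB, or_self, or_true, or_false, if_true, if_false, neg_zero, max_self,
      mul_zero, zero_mul, add_zero, zero_add, sub_zero] <;> ring

theorem mul_mutate_apply {B : Matrix ι ι R} {ℓ : ι} (hB : B ℓ ℓ = 0) (F : Matrix ι ι R)
    (i j : ι) :
    (F * mutate B ℓ) i j = (F * B) i j + (F * matPos B) i ℓ * B ℓ j
      + (F * B) i ℓ * max (-B ℓ j) 0 - 2 * (F i ℓ * B ℓ j + colSel ℓ (F * B) i j) := by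
  simp only [mutate_eq_of_apply_self_eq_zero hB, Matrix.mul_add, Matrix.mul_sub,
    Matrix.mul_smul, ← Matrix.mul_assoc, mul_colSel, mul_rowSel, Matrix.add_apply,
    Matrix.sub_apply, Matrix.smul_apply, smul_eq_mul, colSel_mul_apply]
  rfl

end Steps

section Core

variable {ι R : Type} [CommRing R] [LinearOrder R] [IsOrderedAddMonoid R]

theorem max_max_zero_add_max_neg_zero_add (c u w : R) :
    max (max c 0 + u) (max (-c) 0 + w) = max c 0 + u + max (-(c + (u - w))) 0 := by
  have h : max (-c) 0 + w = max c 0 + u + -(c + (u - w)) := by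
    linear_combination -max_zero_sub_max_neg_zero_eq_self c
  rw [h, ← max_add_add_left, add_zero, max_comm]

theorem matPos_sub_matPos_neg (A : Matrix ι ι R) : matPos A - matPos (-A) = A := by
  ext i j
  exact max_zero_sub_max_neg_zero_eq_self (A i j)

variable [DecidableEq ι]

theorem mutate_neg (B : Matrix ι ι R) (k : ι) : mutate (-B) k = -mutate B k := by
  ext i j
  simp only [mutate, Matrix.neg_apply, neg_neg]
  split_ifs
  · ring
  · linear_combination (B k j) * max_zero_sub_max_neg_zero_eq_self (B i k)
      - (B i k) * max_zero_sub_max_neg_zero_eq_self (B k j)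

variable [Fintype ι]

theorem cMatStep_neg_add_mul {B : Matrix ι ι R} {ℓ : ι} (hB : B ℓ ℓ = 0)
    (C F : Matrix ι ι R) :
    cMatStep (-B) (C + F * B) ℓ = cMatStep B C ℓ + fMatStep B C F ℓ * mutate B ℓ := by
  ext i j
  have hE := max_max_zero_add_max_neg_zero_add (C i ℓ) ((F * matPos B) i ℓ)
    ((F * matPos (-B)) i ℓ)
  rw [← Matrix.sub_apply, ← Matrix.mul_sub, matPos_sub_matPos_neg] at hE
  rw [Matrix.add_apply, cMatStep_apply, cMatStep_apply, fMatStep_mul_apply, hE,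
    mul_mutate_apply hB, mutate]
  simp only [Matrix.add_apply, Matrix.neg_apply, ← colSel_add, true_or, if_true]
  linear_combination (B ℓ j) * max_zero_sub_max_neg_zero_eq_self (C i ℓ)
    - (C i ℓ) * max_zero_sub_max_neg_zero_eq_self (B ℓ j)

theorem Bpath_neg (B : Matrix ι ι R) (p : List ι) : Bpath (-B) p = -Bpath B p := by
  induction p using List.reverseRecOn with
  | nil => rfl
  | append_singleton p ℓ ih =>
    rw [Bpath_append_singleton, Bpath_append_singleton, ih, mutate_neg]

end Core

section SkewSymmetrizable

theorem mul_max_zero_eq_of_mul_eq_neg_mul {a b x y : ℤ} (ha : 0 < a) (hb : 0 < b)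
    (h : a * x = -(b * y)) : a * max x 0 = b * max (-y) 0 := by
  rw [mul_max_of_nonneg _ _ ha.le, mul_max_of_nonneg _ _ hb.le, h, mul_neg, mul_zero, mul_zero]

variable {ι : Type} [Fintype ι] [DecidableEq ι] {B : Matrix ι ι ℤ}

theorem isSkewSymmetrizable_iff :
    IsSkewSymmetrizable B ↔
      ∃ d : ι → ℤ, (∀ i, 0 < d i) ∧ ∀ i j, d i * B i j = -(d j * B j i) := by
  refine exists_congr fun d => and_congr_right fun _ => ?_
  rw [← Matrix.ext_iff, forall_comm]
  simp [Matrix.diagonal_mul]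

theorem IsSkewSymmetrizable.apply_self_eq_zero (hB : IsSkewSymmetrizable B) (i : ι) :
    B i i = 0 := by
  obtain ⟨d, hd, h⟩ := isSkewSymmetrizable_iff.mp hB
  exact (mul_eq_zero.mp (by linarith [h i i] : d i * B i i = 0)).resolve_left (hd i).ne'

theorem IsSkewSymmetrizable.mutate (hB : IsSkewSymmetrizable B) (k : ι) :
    IsSkewSymmetrizable (mutate B k) := by
  obtain ⟨d, hd, h⟩ := isSkewSymmetrizable_iff.mp hB
  refine isSkewSymmetrizable_iff.mpr ⟨d, hd, fun i j => ?_⟩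
  by_cases hi : i = k
  · subst hi
    simp only [_root_.mutate, true_or, or_true, if_true]
    linear_combination -h i j
  by_cases hj : j = k
  · subst hj
    simp only [_root_.mutate, true_or, or_true, if_true]
    linear_combination -h i j
  have hik := mul_max_zero_eq_of_mul_eq_neg_mul (hd i) (hd k) (h i k)
  have hjk := mul_max_zero_eq_of_mul_eq_neg_mul (hd j) (hd k) (h j k)
  simp only [_root_.mutate, hi, hj, or_self, if_false]
  linear_combination h i j + (B k j) * hik + max (-B k i) 0 * h k j
    + max (-B k j) 0 * h i k + (B k i) * hjk

theorem IsSkewSymmetrizable.Bpath (hB : IsSkewSymmetrizable B) (p : List ι) :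
    IsSkewSymmetrizable (Bpath B p) := by
  induction p using List.reverseRecOn with
  | nil => exact hB
  | append_singleton p ℓ ih => rw [Bpath_append_singleton]; exact ih.mutate ℓ

end SkewSymmetrizable

/-- `C^{-B;t_0}_t = C^{B;t_0}_t + F^{B;t_0}_t · B_t`. -/
theorem Cmat_neg_eq_Cmat_add_Fmat_mul_Bpath {n : ℕ} (B : Matrix (Fin n) (Fin n) ℤ)
    (hB : IsSkewSymmetrizable B) (p : List (Fin n)) :
    Cmat (-B) p = Cmat B p + Fmat B p * Bpath B p := by
  induction p using List.reverseRecOn with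
  | nil => simp [Cmat, Fmat, seedOf]
  | append_singleton p ℓ ih =>
    rw [Cmat_append_singleton, Cmat_append_singleton, Fmat_append_singleton,
      Bpath_append_singleton, Bpath_neg, ih]
    exact cMatStep_neg_add_mul ((hB.Bpath p).apply_self_eq_zero ℓ) _ _
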